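/- If h = 2 and the Nash paths of the two switching players do not cover the ring, i.e., N_1 ∪ N_2 ≠ R, then M(π^N) ≤ 2·M(π*). -/
import Mathlib


open Finset

/-- The ring with `n` nodes: edges are indexed by `ZMod n`, where edge `e` joins
node `e` to node `e + 1`.  The clockwise arc from node `s` to node `t` consists of
the edges `s, s+1, …, t-1`. -/
def ringArc (n : ℕ) [NeZero n] (s t : ZMod n) : Finset (ZMod n) :=
  Finset.univ.filter fun e => (e - s).val < (t - s).val

/-- A selfish ring routing (SRR) instance on a ring with `n` nodes (hence `n` links),
with players indexed by a finite type `ι`.  Each link `e` has a linear latency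
function `x ↦ a e * x + b e` with nonnegative coefficients, and player `i` must
connect source `s i` to destination `t i` (distinct nodes) along one of the two arcs. -/
structure SRR (n : ℕ) [NeZero n] (ι : Type) [Fintype ι] where
  a : ZMod n → ℝ
  b : ZMod n → ℝ
  a_nonneg : ∀ e, 0 ≤ a e
  b_nonneg : ∀ e, 0 ≤ b e
  s : ι → ZMod n
  t : ι → ZMod n
  st_ne : ∀ i, s i ≠ t i

namespace SRR

variable {n : ℕ} [NeZero n] {ι : Type} [Fintype ι] [DecidableEq ι]

/-- A routing assigns to each player one of the two arcs between its terminals: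
`true` means the clockwise arc from `s i` to `t i`, `false` the complementary arc. -/
def pathOf (I : SRR n ι) (π : ι → Bool) (i : ι) : Finset (ZMod n) :=
  if π i then ringArc n (I.s i) (I.t i) else ringArc n (I.t i) (I.s i)

/-- The number of players whose path uses link `e` under routing `π`. -/
def load (I : SRR n ι) (π : ι → Bool) (e : ZMod n) : ℕ :=
  (Finset.univ.filter fun j => e ∈ I.pathOf π j).card

/-- The latency `ℓ(P, π)` of a set of links `P` under routing `π`. -/
noncomputable def cost (I : SRR n ι) (π : ι → Bool) (P : Finset (ZMod n)) : ℝ :=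
  ∑ e ∈ P, (I.a e * I.load π e + I.b e)

/-- `M(π)`: the maximum latency experienced by a player under routing `π`. -/
noncomputable def Mval (I : SRR n ι) (π : ι → Bool) : ℝ :=
  ⨆ i : ι, I.cost π (I.pathOf π i)

/-- `π` is a Nash equilibrium: no player strictly decreases its latency by
unilaterally switching to the complementary arc. -/
def Nash (I : SRR n ι) (π : ι → Bool) : Prop :=
  ∀ i, I.cost π (I.pathOf π i) ≤
    I.cost (Function.update π i (!(π i))) (I.pathOf (Function.update π i (!(π i))) i)

/-- `π` is an optimal routing: it minimizes the maximum player latency. -/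
def Optimal (I : SRR n ι) (π : ι → Bool) : Prop :=
  ∀ π' : ι → Bool, I.Mval π ≤ I.Mval π'

/-- The set of switching players: those whose path in `πN` differs from their
path in `πQ`. -/
def switching (I : SRR n ι) (πN πQ : ι → Bool) : Finset ι :=
  Finset.univ.filter fun i => I.pathOf πN i ≠ I.pathOf πQ i

/-- `πQ` is an optimal routing chosen, among all optimal routings, to minimize the
number of switching players with respect to the Nash routing `πN`. -/
def MinSwitchOpt (I : SRR n ι) (πN πQ : ι → Bool) : Prop :=
  I.Optimal πQ ∧
    ∀ π' : ι → Bool, I.Optimal π' → (I.switching πN πQ).card ≤ (I.switching πN π').card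

end SRR

-- ===== auxiliary lemmas =====

lemma ringArc_compl {n : ℕ} [NeZero n] {s t : ZMod n} (h : s ≠ t) :
    ringArc n t s = (ringArc n s t)ᶜ := by
  ext e
  simp only [ringArc, Finset.mem_compl, Finset.mem_filter, Finset.mem_univ, true_and]
  have hd : (t - s) ≠ 0 := by simpa [sub_eq_zero] using (Ne.symm h)
  have hd0 : (t - s).val ≠ 0 := by simpa [ZMod.val_eq_zero] using hd
  have h1 : e - t = (e - s) + (-(t - s)) := by ring
  have h2 : s - t = -(t - s) := by ring
  rw [h1, h2, ZMod.val_add, ZMod.neg_val, if_neg hd]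
  have hu := ZMod.val_lt (e - s)
  have hv := ZMod.val_lt (t - s)
  have hn : 0 < n := Nat.pos_of_ne_zero (NeZero.ne n)
  set a := (e - s).val
  set b := (t - s).val
  have hmod : (a + (n - b)) % n = if a < b then a + (n - b) else a + (n - b) - n := by
    rcases lt_or_ge (a + (n - b)) n with hlt | hge
    · rw [Nat.mod_eq_of_lt hlt, if_pos (by omega)]
    · rw [Nat.mod_eq_sub_mod hge, Nat.mod_eq_of_lt (by omega), if_neg (by omega)]
  rw [hmod]
  split <;> omega

namespace SRR

set_option linter.unusedSectionVars false

variable {n : ℕ} [NeZero n] {ι : Type} [Fintype ι] [DecidableEq ι]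

lemma pathOf_compl_of_ne (I : SRR n ι) {π π' : ι → Bool} {i : ι} (h : π i ≠ π' i) :
    I.pathOf π' i = (I.pathOf π i)ᶜ := by
  unfold SRR.pathOf
  cases hb : π i <;> cases hb' : π' i <;> rw [hb, hb'] at h <;> simp at h <;> simp
  · exact ringArc_compl (Ne.symm (I.st_ne i))
  · exact ringArc_compl (I.st_ne i)

lemma bool_ne_of_path_ne (I : SRR n ι) {π π' : ι → Bool} {i : ι}
    (h : I.pathOf π i ≠ I.pathOf π' i) : π i ≠ π' i := by
  intro hb
  exact h (by unfold SRR.pathOf; rw [hb])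

lemma load_cast (I : SRR n ι) (π : ι → Bool) (e : ZMod n) :
    ((I.load π e : ℝ)) = ∑ j, if e ∈ I.pathOf π j then (1 : ℝ) else 0 := by
  unfold SRR.load
  rw [Finset.card_filter, Nat.cast_sum]
  simp

lemma cost_nonneg (I : SRR n ι) (π : ι → Bool) (P : Finset (ZMod n)) :
    0 ≤ I.cost π P := by
  refine Finset.sum_nonneg fun e _ => add_nonneg ?_ (I.b_nonneg e)
  exact mul_nonneg (I.a_nonneg e) (Nat.cast_nonneg _)

lemma cost_le_Mval (I : SRR n ι) [Nonempty ι] (π : ι → Bool) (i : ι) :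
    I.cost π (I.pathOf π i) ≤ I.Mval π :=
  le_ciSup (f := fun j => I.cost π (I.pathOf π j))
    (Set.Finite.bddAbove (Set.finite_range _)) i

end SRR

/-- if `h = 2` and the Nash paths of the two switching players do
not cover the ring, then `M(πN) ≤ 2 * M(πQ)`. -/
theorem srr_h_eq_two_noncovering {n k : ℕ} [NeZero n] (I : SRR n (Fin k))
    (πN πQ : Fin k → Bool) (hN : I.Nash πN) (hQ : I.MinSwitchOpt πN πQ)
    (hh : (I.switching πN πQ).card = 2)
    (hcov : (I.switching πN πQ).biUnion (I.pathOf πN) ≠ Finset.univ) :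
    I.Mval πN ≤ 2 * I.Mval πQ := by
  classical
  obtain ⟨i1, i2, hne, hsw⟩ := Finset.card_eq_two.mp hh
  haveI : Nonempty (Fin k) := ⟨i1⟩
  have hmem1 : i1 ∈ I.switching πN πQ := by rw [hsw]; simp
  have hmem2 : i2 ∈ I.switching πN πQ := by rw [hsw]; simp
  have hsw1 : I.pathOf πN i1 ≠ I.pathOf πQ i1 := by
    simpa [SRR.switching] using hmem1
  have hsw2 : I.pathOf πN i2 ≠ I.pathOf πQ i2 := by
    simpa [SRR.switching] using hmem2
  have hnonsw : ∀ j, j ∉ ({i1, i2} : Finset (Fin k)) → I.pathOf πN j = I.pathOf πQ j := by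
    intro j hj
    by_contra hc
    have : j ∈ I.switching πN πQ := by simp [SRR.switching, hc]
    rw [hsw] at this
    exact hj this
  set N1 := I.pathOf πN i1 with hN1
  set N2 := I.pathOf πN i2 with hN2
  have hQ1 : I.pathOf πQ i1 = N1ᶜ := I.pathOf_compl_of_ne (I.bool_ne_of_path_ne hsw1)
  have hQ2 : I.pathOf πQ i2 = N2ᶜ := I.pathOf_compl_of_ne (I.bool_ne_of_path_ne hsw2)
  set G := N1 ∩ N2 with hG
  set T := N1ᶜ ∩ N2ᶜ with hT
  -- load difference between the two routings
  have hδ : ∀ e, (I.load πN e : ℝ) - I.load πQ e =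
      ((if e ∈ N1 then (1:ℝ) else 0) - (if e ∈ N1ᶜ then (1:ℝ) else 0))
      + ((if e ∈ N2 then (1:ℝ) else 0) - (if e ∈ N2ᶜ then (1:ℝ) else 0)) := by
    intro e
    rw [I.load_cast, I.load_cast, ← Finset.sum_sub_distrib,
      ← Finset.sum_subset (Finset.subset_univ ({i1, i2} : Finset (Fin k)))
        (fun j _ hj => by rw [hnonsw j hj, sub_self]),
      Finset.sum_pair hne, hQ1, hQ2]
  have hδ' : ∀ e, I.a e * ((I.load πN e : ℝ) - I.load πQ e)
      = (if e ∈ G then 2 * I.a e else 0) - (if e ∈ T then 2 * I.a e else 0) := by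
    intro e
    rw [hδ e, hG, hT]
    by_cases h1 : e ∈ N1 <;> by_cases h2 : e ∈ N2 <;>
      simp [h1, h2] <;> ring
  have key : ∀ P : Finset (ZMod n), I.cost πN P =
      I.cost πQ P + 2 * (∑ e ∈ P ∩ G, I.a e) - 2 * (∑ e ∈ P ∩ T, I.a e) := by
    intro P
    have h0 : I.cost πN P = I.cost πQ P
        + ∑ e ∈ P, I.a e * ((I.load πN e : ℝ) - I.load πQ e) := by
      unfold SRR.cost
      rw [← Finset.sum_add_distrib]
      exact Finset.sum_congr rfl fun e _ => by ring
    rw [h0, Finset.sum_congr rfl fun e _ => hδ' e, Finset.sum_sub_distrib,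
      Finset.sum_ite_mem, Finset.sum_ite_mem, ← Finset.mul_sum, ← Finset.mul_sum]
    ring
  -- the Nash inequality, in usable form
  have nash : ∀ i : Fin k, I.cost πN (I.pathOf πN i) ≤
      I.cost πN ((I.pathOf πN i)ᶜ) + ∑ e ∈ (I.pathOf πN i)ᶜ, I.a e := by
    intro i
    set π' := Function.update πN i (!(πN i)) with hπ'
    have hupd : I.pathOf π' i = (I.pathOf πN i)ᶜ := by
      apply I.pathOf_compl_of_ne (π := πN)
      simp [hπ', Function.update_self]
    have hpath : ∀ j : Fin k, j ≠ i → I.pathOf π' j = I.pathOf πN j := by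
      intro j hj
      unfold SRR.pathOf
      rw [hπ', Function.update_of_ne hj]
    have hload' : ∀ e ∈ (I.pathOf πN i)ᶜ,
        (I.load π' e : ℝ) = I.load πN e + 1 := by
      intro e he
      have hdiff : (I.load π' e : ℝ) - I.load πN e = 1 := by
        rw [I.load_cast, I.load_cast, ← Finset.sum_sub_distrib,
          ← Finset.sum_subset (Finset.subset_univ ({i} : Finset (Fin k)))
            (fun j _ hj => by rw [hpath j (by simpa using hj), sub_self]),
          Finset.sum_singleton, hupd, if_pos he, if_neg (Finset.mem_compl.mp he)]
        norm_num
      linarith [hdiff]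
    have hcost' : I.cost π' ((I.pathOf πN i)ᶜ)
        = I.cost πN ((I.pathOf πN i)ᶜ) + ∑ e ∈ (I.pathOf πN i)ᶜ, I.a e := by
      unfold SRR.cost
      rw [← Finset.sum_add_distrib]
      refine Finset.sum_congr rfl fun e he => ?_
      rw [hload' e he]; ring
    have h := hN i
    rw [hupd, hcost'] at h
    exact h
  -- intersection identities
  have hGN1 : N1 ∩ G = G := by rw [hG]; ext x; simp; try tauto
  have hTN1 : N1 ∩ T = ∅ := by rw [hT]; ext x; simp; try tauto
  have hGC1 : N1ᶜ ∩ G = ∅ := by rw [hG]; ext x; simp; try tauto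
  have hTC1 : N1ᶜ ∩ T = T := by rw [hT]; ext x; simp; try tauto
  have hGN2 : N2 ∩ G = G := by rw [hG]; ext x; simp; try tauto
  have hTN2 : N2 ∩ T = ∅ := by rw [hT]; ext x; simp; try tauto
  have hGC2 : N2ᶜ ∩ G = ∅ := by rw [hG]; ext x; simp; try tauto
  have hTC2 : N2ᶜ ∩ T = T := by rw [hT]; ext x; simp; try tauto
  set M := I.Mval πQ with hM
  set γ := ∑ e ∈ G, I.a e with hγdef
  set τ := ∑ e ∈ T, I.a e with hτdef
  set β := ∑ e ∈ N1ᶜ ∩ N2, I.a e with hβdef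
  set α := ∑ e ∈ N2ᶜ ∩ N1, I.a e with hαdef
  have hτ0 : 0 ≤ τ := Finset.sum_nonneg fun e _ => I.a_nonneg e
  -- cost identities
  have e1 : I.cost πN N1 = I.cost πQ N1 + 2 * γ := by
    rw [key N1, hGN1, hTN1, Finset.sum_empty]; ring
  have e1' : I.cost πN N1ᶜ = I.cost πQ N1ᶜ - 2 * τ := by
    rw [key N1ᶜ, hGC1, hTC1, Finset.sum_empty]; ring
  have e2 : I.cost πN N2 = I.cost πQ N2 + 2 * γ := by
    rw [key N2, hGN2, hTN2, Finset.sum_empty]; ring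
  have e2' : I.cost πN N2ᶜ = I.cost πQ N2ᶜ - 2 * τ := by
    rw [key N2ᶜ, hGC2, hTC2, Finset.sum_empty]; ring
  -- splitting the a-sums over the complements
  have hsplit1 : (∑ e ∈ N1ᶜ, I.a e) = β + τ := by
    have hdd : N1ᶜ \ N2 = T := by rw [hT]; ext x; simp; try tauto
    rw [hβdef, hτdef, ← hdd]
    exact (Finset.sum_inter_add_sum_sdiff N1ᶜ N2 _).symm
  have hsplit2 : (∑ e ∈ N2ᶜ, I.a e) = α + τ := by
    have hdd : N2ᶜ \ N1 = T := by rw [hT]; ext x; simp; try tauto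
    rw [hαdef, hτdef, ← hdd]
    exact (Finset.sum_inter_add_sum_sdiff N2ᶜ N1 _).symm
  -- lower bound on loads in the optimal routing
  have hload1 : ∀ (i : Fin k) (e : ZMod n), e ∈ I.pathOf πQ i → 1 ≤ (I.load πQ e : ℝ) := by
    intro i e he
    have : 0 < I.load πQ e :=
      Finset.card_pos.mpr ⟨i, Finset.mem_filter.mpr ⟨Finset.mem_univ _, he⟩⟩
    exact_mod_cast this
  have hbound : ∀ S P : Finset (ZMod n), S ⊆ P → (∀ e ∈ S, 1 ≤ (I.load πQ e : ℝ)) →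
      (∑ e ∈ S, I.a e) ≤ I.cost πQ P := by
    intro S P hSP hl
    calc (∑ e ∈ S, I.a e) ≤ ∑ e ∈ S, (I.a e * I.load πQ e + I.b e) := by
          refine Finset.sum_le_sum fun e he => ?_
          have h1 : I.a e * 1 ≤ I.a e * I.load πQ e :=
            mul_le_mul_of_nonneg_left (hl e he) (I.a_nonneg e)
          have := I.b_nonneg e
          linarith
      _ ≤ ∑ e ∈ P, (I.a e * I.load πQ e + I.b e) := by
          refine Finset.sum_le_sum_of_subset_of_nonneg hSP fun e _ _ => ?_
          have h1 : (0:ℝ) ≤ I.a e * I.load πQ e :=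
            mul_nonneg (I.a_nonneg e) (Nat.cast_nonneg _)
          have := I.b_nonneg e
          linarith
      _ = I.cost πQ P := rfl
  have hb1 : β ≤ I.cost πQ N2 := by
    rw [hβdef]
    refine hbound _ _ Finset.inter_subset_right fun e he => ?_
    exact hload1 i1 e (by rw [hQ1]; exact (Finset.mem_inter.mp he).1)
  have hb1' : β ≤ I.cost πQ N1ᶜ := by
    rw [hβdef]
    refine hbound _ _ Finset.inter_subset_left fun e he => ?_
    exact hload1 i1 e (by rw [hQ1]; exact (Finset.mem_inter.mp he).1)
  have hb2 : α ≤ I.cost πQ N1 := by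
    rw [hαdef]
    refine hbound _ _ Finset.inter_subset_right fun e he => ?_
    exact hload1 i2 e (by rw [hQ2]; exact (Finset.mem_inter.mp he).1)
  have hb2' : α ≤ I.cost πQ N2ᶜ := by
    rw [hαdef]
    refine hbound _ _ Finset.inter_subset_left fun e he => ?_
    exact hload1 i2 e (by rw [hQ2]; exact (Finset.mem_inter.mp he).1)
  -- Mval bounds
  have hMQ1 : I.cost πQ N1ᶜ ≤ M := by
    rw [← hQ1]; exact I.cost_le_Mval πQ i1
  have hMQ2 : I.cost πQ N2ᶜ ≤ M := by
    rw [← hQ2]; exact I.cost_le_Mval πQ i2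
  -- the two Nash inequalities in optimal-cost form
  have nash1 := nash i1
  have nash2 := nash i2
  rw [show I.pathOf πN i1 = N1 from rfl] at nash1
  rw [show I.pathOf πN i2 = N2 from rfl] at nash2
  have I1 : I.cost πQ N1 + 2 * γ ≤ I.cost πQ N1ᶜ + β - τ := by
    rw [e1, e1', hsplit1] at nash1; linarith
  have I2 : I.cost πQ N2 + 2 * γ ≤ I.cost πQ N2ᶜ + α - τ := by
    rw [e2, e2', hsplit2] at nash2; linarith
  have hcn1 : 0 ≤ I.cost πQ N1 := I.cost_nonneg πQ N1
  have hcn2 : 0 ≤ I.cost πQ N2 := I.cost_nonneg πQ N2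
  -- key claim: 2γ ≤ M
  have hγM : 2 * γ ≤ M := by
    by_contra hcon
    push_neg at hcon
    have c1 : I.cost πQ N1 < β := by linarith
    have c2 : I.cost πQ N2 < α := by linarith
    linarith
  -- conclude: every player's Nash latency is at most 2M
  have hall : ∀ j : Fin k, I.cost πN (I.pathOf πN j) ≤ 2 * M := by
    intro j
    by_cases hj1 : j = i1
    · subst hj1
      rw [show I.pathOf πN j = N1 from rfl, e1]
      linarith
    by_cases hj2 : j = i2
    · subst hj2
      rw [show I.pathOf πN j = N2 from rfl, e2]
      linarith
    · have hp := hnonsw j (by simp [hj1, hj2])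
      rw [key (I.pathOf πN j)]
      have h1 : I.cost πQ (I.pathOf πN j) ≤ M := by
        rw [hp]; exact I.cost_le_Mval πQ j
      have h2 : (∑ e ∈ (I.pathOf πN j) ∩ G, I.a e) ≤ γ := by
        rw [hγdef]
        exact Finset.sum_le_sum_of_subset_of_nonneg Finset.inter_subset_right
          fun e _ _ => I.a_nonneg e
      have h3 : 0 ≤ ∑ e ∈ (I.pathOf πN j) ∩ T, I.a e :=
        Finset.sum_nonneg fun e _ => I.a_nonneg e
      linarith
  exact ciSup_le hall
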